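/- In the minimal bad sequence argument for planar rooted trees: if (T_n) is a sequence of planar rooted trees that is a minimal bad sequence for the quasi-order given by root- and depth-first-ordering-preserving order embeddings (i.e. (T_n) is bad, and for each n, among all bad sequences beginning T_0, ..., T_{n-1}, the tree T_n has the minimal number of vertices), then the set A of all subtrees T_{n,v}, where v ranges over the vertices at distance 1 from the root of T_n and n ranges over all indices, is well-quasi-ordered under the same quasi-order. -/

import Mathlib

/-- A finite rooted tree, encoded as a finite partial order (the tree order,
with the root as maximum element) in which the set of elements above any
vertex is a chain (the path from the vertex to the root). -/
structure RTree where
  V : Type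
  finite : Finite V
  le : V → V → Prop
  le_refl : ∀ v, le v v
  le_antisymm : ∀ v w, le v w → le w v → v = w
  le_trans : ∀ u v w, le u v → le v w → le u w
  root : V
  le_root : ∀ v, le v root
  up_total : ∀ u v w, le u v → le u w → le v w ∨ le w v

/-- A planar rooted tree: a rooted tree together with its depth-first ordering,
a linear order on the vertices arising from the total orderings of the incoming
edges at each vertex via a clockwise depth-first tree walk.  Such linear orders
are exactly those in which ancestors precede descendants and every principal
downset of the tree order is an interval. -/
structure PRTree extends RTree where
  dfle : V → V → Prop
  dfle_refl : ∀ v, dfle v v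
  dfle_antisymm : ∀ v w, dfle v w → dfle w v → v = w
  dfle_trans : ∀ u v w, dfle u v → dfle v w → dfle u w
  dfle_total : ∀ v w, dfle v w ∨ dfle w v
  dfle_of_le : ∀ v w, le v w → dfle w v
  downset_interval : ∀ u a b c, le a u → le c u → dfle a b → dfle b c → le b u

/-- A morphism in the category `PT`: an order embedding of vertex sets which
preserves the root and the depth-first ordering. -/
structure PTHom (T U : PRTree) where
  toFun : T.V → U.V
  inj : Function.Injective toFun
  map_le : ∀ v w, T.le v w → U.le (toFun v) (toFun w)
  reflect_le : ∀ v w, U.le (toFun v) (toFun w) → T.le v w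
  map_root : toFun T.root = U.root
  map_dfle : ∀ v w, T.dfle v w → U.dfle (toFun v) (toFun w)

def PTHom.id (T : PRTree) : PTHom T T where
  toFun := fun v => v
  inj := fun _ _ h => h
  map_le := fun _ _ h => h
  reflect_le := fun _ _ h => h
  map_root := rfl
  map_dfle := fun _ _ h => h

def PTHom.comp {T U W : PRTree} (g : PTHom U W) (f : PTHom T U) :
    PTHom T W where
  toFun := fun v => g.toFun (f.toFun v)
  inj := fun _ _ h => f.inj (g.inj h)
  map_le := fun v w h => g.map_le _ _ (f.map_le v w h)
  reflect_le := fun v w h => f.reflect_le _ _ (g.reflect_le _ _ h)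
  map_root := by show g.toFun (f.toFun T.root) = W.root; rw [f.map_root, g.map_root]
  map_dfle := fun v w h => g.map_dfle _ _ (f.map_dfle v w h)

/-- The subtree `T_v` of `T` consisting of `v` and everything above `v`
in the tree order, rooted at `v`, with the induced planar structure. -/
def PRTree.above (T : PRTree) (v : T.V) : PRTree where
  V := {w : T.V // T.le w v}
  finite := by haveI := T.finite; exact Subtype.finite
  le a b := T.le a.1 b.1
  le_refl a := T.le_refl a.1
  le_antisymm a b h h' := Subtype.ext (T.le_antisymm a.1 b.1 h h')
  le_trans a b c h h' := T.le_trans a.1 b.1 c.1 h h'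
  root := ⟨v, T.le_refl v⟩
  le_root a := a.2
  up_total a b c h h' := T.up_total a.1 b.1 c.1 h h'
  dfle a b := T.dfle a.1 b.1
  dfle_refl a := T.dfle_refl a.1
  dfle_antisymm a b h h' := Subtype.ext (T.dfle_antisymm a.1 b.1 h h')
  dfle_trans a b c h h' := T.dfle_trans a.1 b.1 c.1 h h'
  dfle_total a b := T.dfle_total a.1 b.1
  dfle_of_le a b h := T.dfle_of_le a.1 b.1 h
  downset_interval u a b c h1 h2 h3 h4 := T.downset_interval u.1 a.1 b.1 c.1 h1 h2 h3 h4

open Classical in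
noncomputable def aboveHom (T : PRTree) (v : T.V) (hv : v ≠ T.root) :
    PTHom (T.above v) T where
  toFun w := if w.1 = v then T.root else w.1
  inj := by
    have notroot : ∀ w : (T.above v).V, w.1 ≠ T.root := by
      intro w hw
      apply hv
      have h2 : T.le T.root v := by rw [← hw]; exact w.2
      exact T.le_antisymm v T.root (T.le_root v) h2
    intro a b h
    dsimp at h
    apply Subtype.ext
    by_cases ha : a.1 = v <;> by_cases hb : b.1 = v <;>
      simp only [ha, hb, if_pos rfl, if_neg, if_true, if_false] at h ⊢
    · exact absurd h.symm (notroot b)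
    · exact absurd h (notroot a)
    · exact h
  map_le := by
    intro a b h
    show T.le (if a.1 = v then T.root else a.1) (if b.1 = v then T.root else b.1)
    by_cases hb : b.1 = v
    · simp only [hb, if_pos rfl]; exact T.le_root _
    · have ha : a.1 ≠ v := by
        intro ha
        apply hb
        apply T.le_antisymm b.1 v b.2
        have h2 : T.le a.1 b.1 := h
        rw [ha] at h2; exact h2
      simp only [ha, hb, if_neg, if_false]
      exact h
  reflect_le := by
    intro a b h
    change T.le (if a.1 = v then T.root else a.1) (if b.1 = v then T.root else b.1) at h
    show T.le a.1 b.1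
    by_cases hb : b.1 = v
    · rw [hb]; exact a.2
    · by_cases ha : a.1 = v
      · simp only [ha, hb, if_pos rfl, if_neg, if_false] at h
        exfalso
        have hbr : b.1 = T.root := T.le_antisymm _ _ (T.le_root _) h
        apply hv
        apply T.le_antisymm v T.root (T.le_root v)
        rw [← hbr]; exact b.2
      · simp only [ha, hb, if_neg, if_false] at h
        exact h
  map_root := if_pos rfl
  map_dfle := by
    intro a b h
    show T.dfle (if a.1 = v then T.root else a.1) (if b.1 = v then T.root else b.1)
    show T.dfle _ _
    by_cases ha : a.1 = v
    · simp only [ha, if_pos rfl]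
      exact T.dfle_of_le _ _ (T.le_root _)
    · by_cases hb : b.1 = v
      · exfalso
        have h2 : T.dfle b.1 a.1 := by
          apply T.dfle_of_le
          rw [hb]; exact a.2
        exact ha ((T.dfle_antisymm _ _ h h2).trans hb)
      · simp only [ha, hb, if_neg, if_false]
        exact h

/-- The minimal bad sequence argument: if `(T n)` is a minimal bad sequence of
planar rooted trees for the quasi-order given by root- and
depth-first-ordering-preserving order embeddings, then the collection of all
subtrees `T_{n,v}`, where `v` ranges over the vertices at distance `1` from
the root of `T n`, is well-quasi-ordered under the same quasi-order. -/
theorem minimal_bad_sequence_subtrees_wqo (T : ℕ → PRTree)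
    (hbad : ∀ i j, i < j → ¬ Nonempty (PTHom (T i) (T j)))
    (hmin : ∀ (n : ℕ) (S : ℕ → PRTree),
        (∀ k, k < n → S k = T k) →
        (∀ i j, i < j → ¬ Nonempty (PTHom (S i) (S j))) →
        Nat.card (T n).V ≤ Nat.card (S n).V)
    (nk : ℕ → ℕ) (v : ∀ k, (T (nk k)).V)
    (hchild : ∀ k, v k ≠ (T (nk k)).root ∧
        ∀ w, (T (nk k)).le (v k) w → w = v k ∨ w = (T (nk k)).root) :
    ∃ i j, i < j ∧
      Nonempty (PTHom ((T (nk i)).above (v i)) ((T (nk j)).above (v j))) := by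
  by_contra hcon
  push_neg at hcon
  -- pick k₀ minimizing nk
  obtain ⟨k₀, hk₀⟩ : ∃ k₀, ∀ k, nk k₀ ≤ nk k := by
    obtain ⟨m, ⟨k₀, rfl⟩, hm⟩ :=
      (Nat.lt_wfRel.wf).has_min (Set.range nk) ⟨nk 0, 0, rfl⟩
    exact ⟨k₀, fun k => not_lt.1 (hm (nk k) ⟨k, rfl⟩)⟩
  set n := nk k₀ with hn
  classical
  set S : ℕ → PRTree := fun i =>
    if i < n then T i else (T (nk (k₀ + (i - n)))).above (v (k₀ + (i - n))) with hS
  have hS1 : ∀ k, k < n → S k = T k := fun k hk => by simp [hS, hk]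
  have hS2 : ∀ k, ¬ k < n → S k = (T (nk (k₀ + (k - n)))).above (v (k₀ + (k - n))) :=
    fun k hk => by simp [hS, hk]
  have hbadS : ∀ i j, i < j → ¬ Nonempty (PTHom (S i) (S j)) := by
    intro i j hij ⟨f⟩
    by_cases hj : j < n
    · have hi : i < n := hij.trans hj
      rw [hS1 i hi, hS1 j hj] at f
      exact hbad i j hij ⟨f⟩
    · rw [hS2 j hj] at f
      by_cases hi : i < n
      · rw [hS1 i hi] at f
        have g := aboveHom (T (nk (k₀ + (j - n)))) (v (k₀ + (j - n)))
          (hchild (k₀ + (j - n))).1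
        exact hbad i (nk (k₀ + (j - n))) (lt_of_lt_of_le hi (hk₀ _)) ⟨g.comp f⟩
      · rw [hS2 i hi] at f
        have : k₀ + (i - n) < k₀ + (j - n) := by omega
        exact (hcon _ _ this).false f
  have hle := hmin n S hS1 hbadS
  have hSn : S n = (T n).above (v k₀) := by
    rw [hS2 n (lt_irrefl n)]
    have hk : k₀ + (n - n) = k₀ := by omega
    rw [hk]
  rw [hSn] at hle
  have hlt : Nat.card ((T n).above (v k₀)).V < Nat.card (T n).V := by
    haveI := (T n).finite
    have : ¬ (T n).le (T n).root (v k₀) := by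
      intro h
      exact (hchild k₀).1 ((T n).le_antisymm _ _ (h) ((T n).le_root _)).symm
    exact Finite.card_subtype_lt this
  omega
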